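/- arXiv:2402.17552 — 2 statements merged into one kernel-verified Lean document; each statement's English description precedes it below -/
import Mathlib

section
/- Let A ∈ L(K,H) and let W ∈ L(H) be Krein-selfadjoint. The following statements are equivalent: (i) for every x ∈ H the equation Az = x admits a W-ILSS; (ii) ran A + ker(A^# W) = H and ran A is W-nonnegative (note ker(A^# W) = {h ∈ H : [h, Ws] = 0 for all s ∈ ran A}); (iii) there exists X ∈ L(H,K) with A^# W (A X − I) = 0 and ran A is W-nonnegative; (iv) A admits an indefinite W-inverse. -/
/-!
Write `T = J_H W`; Krein-selfadjointness of `W` makes `T` selfadjoint in the Hilbert sense, and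
`u` is a W-ILSS of `Az = x` iff it minimizes `z ↦ re ⟪T (Az - x), Az - x⟫`. Along the line
`u + t v` this function exceeds its value at `u` by the real quadratic
`t² re ⟪T (Av), Av⟫ + 2t re ⟪T (Au - x), Av⟫`, which is nonnegative for all `t` iff its linear
coefficient vanishes and its leading one is nonnegative. So the minimizers are exactly the
solutions of the normal equation `A* T (Au - x) = 0`, provided `T` is nonnegative on `ran A`.
The only analytic input is for (ii) ⇒ (iii): a pointwise solvable normal equation has a bounded
solution operator, by a Douglas-type range inclusion lemma proved with the closed graph theorem
on `(ker S)ᗮ`.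
-/

open ContinuousLinearMap

noncomputable section

variable {H K : Type*} [NormedAddCommGroup H] [InnerProductSpace ℂ H] [CompleteSpace H]
  [NormedAddCommGroup K] [InnerProductSpace ℂ K] [CompleteSpace K]

/-- The Krein adjoint `A^# = J_K ∘ A* ∘ J_H` of an operator `A : K →L[ℂ] H` between
Krein spaces with signature operators `JK` and `JH`. -/
def kreinAdjoint (JK : K →L[ℂ] K) (JH : H →L[ℂ] H) (A : K →L[ℂ] H) : H →L[ℂ] K :=
  JK ∘L (ContinuousLinearMap.adjoint A) ∘L JH

/-- `u` is an indefinite weighted least squares solution (W-ILSS) of `A z = x`: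
`[W(Au−x),Au−x] ≤ [W(Az−x),Az−x]` for all `z`, where `[x,y] = ⟨J_H x, y⟩`. -/
def IsWILSS (JH : H →L[ℂ] H) (A : K →L[ℂ] H) (W : H →L[ℂ] H) (x : H) (u : K) : Prop :=
  ∀ z : K,
    (inner ℂ (JH (W (A u - x))) (A u - x) : ℂ).re ≤
      (inner ℂ (JH (W (A z - x))) (A z - x) : ℂ).re

section RangeInclusion

variable {𝕜 E F G : Type*} [RCLike 𝕜]
  [NormedAddCommGroup E] [NormedSpace 𝕜 E] [CompleteSpace E]
  [NormedAddCommGroup F] [InnerProductSpace 𝕜 F] [CompleteSpace F]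
  [NormedAddCommGroup G] [NormedSpace 𝕜 G]

theorem ContinuousLinearMap.exists_comp_eq_of_range_le (S : F →L[𝕜] G) (N : E →L[𝕜] G)
    (h : LinearMap.range (N : E →ₗ[𝕜] G) ≤ LinearMap.range (S : F →ₗ[𝕜] G)) :
    ∃ X : E →L[𝕜] F, S ∘L X = N := by
  set V := S.kerᗮ
  let SV : V →L[𝕜] G := S ∘L V.subtypeL
  have hinj : Function.Injective SV := by
    refine (injective_iff_map_eq_zero SV).2 fun y hy => ?_
    exact Subtype.ext <| Submodule.disjoint_def'.1 S.ker.orthogonal_disjoint.symm _ y.2 _ hy rfl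
  have hrange : ∀ x, N x ∈ LinearMap.range (SV : V →ₗ[𝕜] G) := by
    intro x
    obtain ⟨z, hz⟩ := h ⟨x, rfl⟩
    refine ⟨⟨z - S.ker.starProjection z, S.ker.sub_starProjection_mem_orthogonal z⟩, ?_⟩
    have : S (S.ker.starProjection z) = 0 := S.ker.starProjection_apply_mem z
    simpa [SV, this] using hz
  let L : E →ₗ[𝕜] V := (LinearEquiv.ofInjective (SV : V →ₗ[𝕜] G) hinj).symm ∘ₗ
    (N : E →ₗ[𝕜] G).codRestrict _ hrange
  have hL : ∀ x, SV (L x) = N x := fun x =>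
    LinearEquiv.ofInjective_symm_apply (h := hinj) (SV : V →ₗ[𝕜] G) ⟨N x, hrange x⟩
  have hgraph : (L.graph : Set (E × V)) = {p | SV p.2 = N p.1} := by
    ext p
    simp only [SetLike.mem_coe, LinearMap.mem_graph_iff, Set.mem_ofPred_eq]
    exact ⟨fun hp => hp ▸ hL p.1, fun hp => hinj (hp.trans (hL p.1).symm)⟩
  have hclosed : IsClosed (L.graph : Set (E × V)) :=
    hgraph ▸ isClosed_eq (by fun_prop) (by fun_prop)
  exact ⟨V.subtypeL ∘L ContinuousLinearMap.ofIsClosedGraph hclosed, ext hL⟩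

end RangeInclusion

theorem eq_zero_and_nonneg_of_forall_quadratic_nonneg {b c : ℝ}
    (h : ∀ t : ℝ, 0 ≤ c * (t * t) + b * t) : b = 0 ∧ 0 ≤ c := by
  have hdisc := discrim_le_zero (K := ℝ) (c := 0) (by simpa using h)
  rw [discrim, mul_zero, sub_zero] at hdisc
  have hb : b = 0 := pow_eq_zero_iff two_ne_zero |>.1 (le_antisymm hdisc (sq_nonneg b))
  exact ⟨hb, by simpa [hb] using h 1⟩

section LeastSquares

open scoped InnerProductSpace
open RCLike ComplexConjugate

variable {𝕜 E F : Type*} [RCLike 𝕜]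
  [NormedAddCommGroup E] [InnerProductSpace 𝕜 E] [CompleteSpace E]
  [NormedAddCommGroup F] [InnerProductSpace 𝕜 F] [CompleteSpace F]
  {T : E →L[𝕜] E}

theorem IsSelfAdjoint.reApplyInnerSelf_add (hT : IsSelfAdjoint T) (a b : E) :
    T.reApplyInnerSelf (a + b) =
      T.reApplyInnerSelf a + 2 * re ⟪T a, b⟫_𝕜 + T.reApplyInnerSelf b := by
  have hsymm : ⟪T b, a⟫_𝕜 = conj ⟪T a, b⟫_𝕜 :=
    (hT.isSymmetric b a).trans (inner_conj_symm b (T a)).symm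
  simp only [reApplyInnerSelf_apply, map_add, inner_add_left, inner_add_right, hsymm, conj_re]
  ring

theorem IsSelfAdjoint.forall_reApplyInnerSelf_le_iff (hT : IsSelfAdjoint T) (A : F →L[𝕜] E)
    (x : E) (u : F) :
    (∀ z, T.reApplyInnerSelf (A u - x) ≤ T.reApplyInnerSelf (A z - x)) ↔
      adjoint A (T (A u - x)) = 0 ∧ ∀ z, 0 ≤ T.reApplyInnerSelf (A z) := by
  set r := A u - x
  constructor
  · intro hmin
    have key : ∀ v, re ⟪T r, A v⟫_𝕜 = 0 ∧ 0 ≤ T.reApplyInnerSelf (A v) := by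
      intro v
      have hb := eq_zero_and_nonneg_of_forall_quadratic_nonneg
        (b := 2 * re ⟪T r, A v⟫_𝕜) (c := T.reApplyInnerSelf (A v)) fun t => by
          have hmove : A (u + (t : 𝕜) • v) - x = r + (t : 𝕜) • A v := by
            simp only [r, map_add, map_smul]
            abel
          have := hmin (u + (t : 𝕜) • v)
          rw [hmove, hT.reApplyInnerSelf_add, reApplyInnerSelf_smul, norm_ofReal, sq_abs,
            inner_smul_right, re_ofReal_mul] at this
          linarith
      exact ⟨by simpa using hb.1, hb.2⟩
    refine ⟨?_, fun v => (key v).2⟩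
    have hg := (key (adjoint A (T r))).1
    rwa [← adjoint_inner_left, inner_self_eq_norm_sq, sq_eq_zero_iff, norm_eq_zero] at hg
  · rintro ⟨hnormal, hpos⟩ z
    calc T.reApplyInnerSelf r
        ≤ T.reApplyInnerSelf r + 2 * re ⟪T r, A (z - u)⟫_𝕜 +
            T.reApplyInnerSelf (A (z - u)) := by
          rw [← adjoint_inner_left, hnormal, inner_zero_left, map_zero]
          linarith [hpos (z - u)]
      _ = T.reApplyInnerSelf (A z - x) := by
          rw [← hT.reApplyInnerSelf_add]
          congr 1
          simp only [r, map_sub]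
          abel

theorem isSelfAdjoint_comp_of_conj_adjoint_eq {J W : E →L[𝕜] E} (hJ : IsSelfAdjoint J)
    (hJ2 : J ∘L J = 1) (hW : J ∘L adjoint W ∘L J = W) : IsSelfAdjoint (J ∘L W) := by
  rw [isSelfAdjoint_iff', adjoint_comp, hJ.adjoint_eq]
  conv_rhs => rw [← hW, ← comp_assoc, hJ2, one_def, id_comp]

end LeastSquares

theorem kreinAdjoint_apply_eq_zero_iff {JK : K →L[ℂ] K} (hJK2 : JK ∘L JK = 1) (JH : H →L[ℂ] H)
    (A : K →L[ℂ] H) (y : H) : kreinAdjoint JK JH A y = 0 ↔ adjoint A (JH y) = 0 := by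
  have hinj : Function.Injective JK :=
    Function.LeftInverse.injective (g := JK) fun v => by simpa using DFunLike.congr_fun hJK2 v
  exact map_eq_zero_iff JK hinj

theorem stmt1_general
    (JH : H →L[ℂ] H) (hJHsa : IsSelfAdjoint JH) (hJH2 : JH ∘L JH = 1)
    (JK : K →L[ℂ] K) (hJK2 : JK ∘L JK = 1)
    (A : K →L[ℂ] H) (W : H →L[ℂ] H)
    (hW : JH ∘L (ContinuousLinearMap.adjoint W) ∘L JH = W) :
    List.TFAE
      [ -- (i) `Az = x` admits a W-ILSS for every `x ∈ H`
        ∀ x : H, ∃ u : K, IsWILSS JH A W x u,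
        -- (ii) `ran A + ker(A^# W) = H` and `ran A` is `W`-nonnegative
        (∀ x : H, ∃ (z : K) (h : H),
            kreinAdjoint JK JH A (W h) = 0 ∧ x = A z + h) ∧
          (∀ z : K, 0 ≤ (inner ℂ (JH (W (A z))) (A z) : ℂ).re),
        -- (iii) the normal equation `A^# W (AX − I) = 0` admits a solution and
        -- `ran A` is `W`-nonnegative
        (∃ X : H →L[ℂ] K,
            (kreinAdjoint JK JH A) ∘L (W ∘L (A ∘L X - 1)) = 0) ∧
          (∀ z : K, 0 ≤ (inner ℂ (JH (W (A z))) (A z) : ℂ).re),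
        -- (iv) `A` admits an indefinite `W`-inverse
        ∃ G : H →L[ℂ] K, ∀ x : H, IsWILSS JH A W x (G x) ] := by
  have hILSS (x : H) (u : K) := (isSelfAdjoint_comp_of_conj_adjoint_eq hJHsa hJH2 hW
    ).forall_reApplyInnerSelf_le_iff A x u
  have hKer := kreinAdjoint_apply_eq_zero_iff hJK2 JH A
  tfae_have 1 → 2
  | hsol => by
    obtain ⟨u₀, hu₀⟩ := hsol 0
    refine ⟨fun x => ?_, ((hILSS 0 u₀).1 hu₀).2⟩
    obtain ⟨u, hu⟩ := hsol x
    refine ⟨u, x - A u, ?_, by abel⟩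
    rw [hKer, ← neg_sub, map_neg, map_neg, map_neg, neg_eq_zero]
    exact ((hILSS x u).1 hu).1
  tfae_have 2 → 3
  | ⟨hsum, hpos⟩ => by
    obtain ⟨X, hX⟩ := (adjoint A ∘L JH ∘L W ∘L A).exists_comp_eq_of_range_le
      (adjoint A ∘L JH ∘L W) <| by
        rintro _ ⟨x, rfl⟩
        obtain ⟨z, h, hh, rfl⟩ := hsum x
        exact ⟨z, by simp [(hKer _).1 hh]⟩
    refine ⟨⟨X, ext fun x => (hKer _).2 ?_⟩, hpos⟩
    simpa [sub_eq_zero] using DFunLike.congr_fun hX x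
  tfae_have 3 → 4
  | ⟨⟨X, hX⟩, hpos⟩ =>
    ⟨X, fun x => (hILSS x (X x)).2 ⟨(hKer _).1 (DFunLike.congr_fun hX x), hpos⟩⟩
  tfae_have 4 → 1
  | ⟨G, hG⟩ => fun x => ⟨G x, hG x⟩
  tfae_finish

/-- equivalence of (i) solvability of the indefinite weighted least squares
problem for every `x`, (ii) `ran A + ker(A^# W) = H` together with `W`-nonnegativity of
`ran A`, (iii) solvability of the normal equation `A^# W (AX − I) = 0` together with
`W`-nonnegativity of `ran A`, and (iv) existence of an indefinite `W`-inverse of `A`. -/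
theorem stmt1
    [TopologicalSpace.SeparableSpace H] [TopologicalSpace.SeparableSpace K]
    (JH : H →L[ℂ] H) (hJHsa : IsSelfAdjoint JH) (hJH2 : JH ∘L JH = 1)
    (JK : K →L[ℂ] K) (hJKsa : IsSelfAdjoint JK) (hJK2 : JK ∘L JK = 1)
    (A : K →L[ℂ] H) (W : H →L[ℂ] H)
    (hW : JH ∘L (ContinuousLinearMap.adjoint W) ∘L JH = W) :
    List.TFAE
      [ -- (i) `Az = x` admits a W-ILSS for every `x ∈ H`
        ∀ x : H, ∃ u : K, IsWILSS JH A W x u,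
        -- (ii) `ran A + ker(A^# W) = H` and `ran A` is `W`-nonnegative
        (∀ x : H, ∃ (z : K) (h : H),
            kreinAdjoint JK JH A (W h) = 0 ∧ x = A z + h) ∧
          (∀ z : K, 0 ≤ (inner ℂ (JH (W (A z))) (A z) : ℂ).re),
        -- (iii) the normal equation `A^# W (AX − I) = 0` admits a solution and
        -- `ran A` is `W`-nonnegative
        (∃ X : H →L[ℂ] K,
            (kreinAdjoint JK JH A) ∘L (W ∘L (A ∘L X - 1)) = 0) ∧
          (∀ z : K, 0 ≤ (inner ℂ (JH (W (A z))) (A z) : ℂ).re),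
        -- (iv) `A` admits an indefinite `W`-inverse
        ∃ G : H →L[ℂ] K, ∀ x : H, IsWILSS JH A W x (G x) ] :=
  stmt1_general JH hJHsa hJH2 JK hJK2 A W hW
end
end

section
/- Let A ∈ L(K,H) and let W ∈ L(H) be Krein-selfadjoint. Suppose ran A is W-nonnegative, ran A + ker(A^# W) = H, and X₀ ∈ L(H,K) satisfies A^# W (A X₀ − I) = 0. Then M := (AX₀−I)^# W (AX₀−I) is the maximum, in the Krein order, of the set {Z ∈ L(H) : Z^# = Z, W − Z is Krein-positive, and ran Z ⊆ ker A^#}; that is, M^# = M, W − M is Krein-positive, ran M ⊆ ker A^#, and M − Z is Krein-positive for every Z in that set. -/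
open ContinuousLinearMap

noncomputable section

variable {H K : Type*} [NormedAddCommGroup H] [InnerProductSpace ℂ H] [CompleteSpace H]
  [NormedAddCommGroup K] [InnerProductSpace ℂ K] [CompleteSpace K]

/-- An operator `S ∈ L(H)` is Krein-positive: `S^# = S` and `[Sx,x] ≥ 0` for all `x`. -/
def KreinPositive (JH : H →L[ℂ] H) (S : H →L[ℂ] H) : Prop :=
  kreinAdjoint JH JH S = S ∧ ∀ x : H, 0 ≤ (inner ℂ (JH (S x)) x : ℂ).re

/-- The error operator `(AX − I)^# W (AX − I)`. -/
def errOp (JH : H →L[ℂ] H) (A : K →L[ℂ] H) (W : H →L[ℂ] H) (X : H →L[ℂ] K) :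
    H →L[ℂ] H :=
  kreinAdjoint JH JH (A ∘L X - 1) ∘L (W ∘L (A ∘L X - 1))

/-!
With `P = A X₀` the normal equation gives `P^# W (P - I) = 0`, hence `M = W - W P` and, taking
Krein adjoints, `W - M = P^# W P`, which is Krein-positive because `ran A` is `W`-nonnegative.
A Krein-selfadjoint `Z` with `ran Z ⊆ ker A^#` satisfies `P^# Z = 0`, hence `Z P = 0` and
`Z = (P - I)^# Z (P - I)`; so `M - Z = (P - I)^# (W - Z) (P - I)` is a congruence of the
Krein-positive `W - Z`.
-/

theorem apply_apply_of_comp_eq_one {E : Type*} [NormedAddCommGroup E] [NormedSpace ℂ E]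
    {J : E →L[ℂ] E} (hJ2 : J ∘L J = 1) (x : E) : J (J x) = x :=
  DFunLike.congr_fun hJ2 x

section KreinAdjoint

variable {E F G : Type*}
  [NormedAddCommGroup E] [InnerProductSpace ℂ E] [CompleteSpace E]
  [NormedAddCommGroup F] [InnerProductSpace ℂ F] [CompleteSpace F]
  [NormedAddCommGroup G] [InnerProductSpace ℂ G] [CompleteSpace G]

theorem kreinAdjoint_sub (JE : E →L[ℂ] E) (JF : F →L[ℂ] F) (S T : E →L[ℂ] F) :
    kreinAdjoint JE JF (S - T) = kreinAdjoint JE JF S - kreinAdjoint JE JF T := by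
  simp only [kreinAdjoint, map_sub, sub_comp, comp_sub]

theorem kreinAdjoint_one {J : E →L[ℂ] E} (hJ2 : J ∘L J = 1) : kreinAdjoint J J 1 = 1 := by
  rw [kreinAdjoint, adjoint_one, one_def, id_comp]
  exact hJ2

theorem kreinAdjoint_comp (JE : E →L[ℂ] E) {JF : F →L[ℂ] F} (JG : G →L[ℂ] G)
    (hJF2 : JF ∘L JF = 1) (T : E →L[ℂ] F) (S : F →L[ℂ] G) :
    kreinAdjoint JE JG (S ∘L T) = kreinAdjoint JE JF T ∘L kreinAdjoint JF JG S := by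
  ext x
  simp [kreinAdjoint, adjoint_comp, apply_apply_of_comp_eq_one hJF2]

theorem kreinAdjoint_kreinAdjoint {JE : E →L[ℂ] E} {JF : F →L[ℂ] F}
    (hJE : IsSelfAdjoint JE) (hJE2 : JE ∘L JE = 1)
    (hJF : IsSelfAdjoint JF) (hJF2 : JF ∘L JF = 1) (T : E →L[ℂ] F) :
    kreinAdjoint JF JE (kreinAdjoint JE JF T) = T := by
  ext x
  simp [kreinAdjoint, adjoint_comp, isSelfAdjoint_iff'.mp hJE, isSelfAdjoint_iff'.mp hJF,
    apply_apply_of_comp_eq_one hJE2, apply_apply_of_comp_eq_one hJF2]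

theorem inner_kreinAdjoint_apply {JE : E →L[ℂ] E} (JF : F →L[ℂ] F) (hJE2 : JE ∘L JE = 1)
    (T : E →L[ℂ] F) (y : F) (x : E) :
    inner ℂ (JE (kreinAdjoint JE JF T y)) x = inner ℂ (JF y) (T x) := by
  simp [kreinAdjoint, apply_apply_of_comp_eq_one hJE2, adjoint_inner_left]

end KreinAdjoint

section Congruence

variable {E F : Type*}
  [NormedAddCommGroup E] [InnerProductSpace ℂ E] [CompleteSpace E]
  [NormedAddCommGroup F] [InnerProductSpace ℂ F] [CompleteSpace F]
  {JE : E →L[ℂ] E} {JF : F →L[ℂ] F}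

theorem kreinAdjoint_conj (hJE : IsSelfAdjoint JE) (hJE2 : JE ∘L JE = 1)
    (hJF : IsSelfAdjoint JF) (hJF2 : JF ∘L JF = 1) {S : F →L[ℂ] F}
    (hS : kreinAdjoint JF JF S = S) (T : E →L[ℂ] F) :
    kreinAdjoint JE JE (kreinAdjoint JE JF T ∘L S ∘L T) = kreinAdjoint JE JF T ∘L S ∘L T := by
  rw [kreinAdjoint_comp JE JE hJF2, kreinAdjoint_comp JE JF hJF2, hS,
    kreinAdjoint_kreinAdjoint hJE hJE2 hJF hJF2, comp_assoc]

theorem kreinPositive_conj (hJE : IsSelfAdjoint JE) (hJE2 : JE ∘L JE = 1)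
    (hJF : IsSelfAdjoint JF) (hJF2 : JF ∘L JF = 1) {S : F →L[ℂ] F}
    (hS : kreinAdjoint JF JF S = S) {T : E →L[ℂ] F}
    (hST : ∀ x, 0 ≤ (inner ℂ (JF (S (T x))) (T x) : ℂ).re) :
    KreinPositive JE (kreinAdjoint JE JF T ∘L S ∘L T) :=
  ⟨kreinAdjoint_conj hJE hJE2 hJF hJF2 hS T, fun x => by
    rw [comp_apply, inner_kreinAdjoint_apply JF hJE2]
    exact hST x⟩

theorem kreinAdjoint_comp_comp_eq_zero (hJF2 : JF ∘L JF = 1) {A : F →L[ℂ] E} {T : E →L[ℂ] E}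
    (hAT : kreinAdjoint JF JE A ∘L T = 0) (X : E →L[ℂ] F) :
    kreinAdjoint JE JE (A ∘L X) ∘L T = 0 := by
  rw [kreinAdjoint_comp JE JE hJF2, comp_assoc, hAT, comp_zero]

variable {A : F →L[ℂ] E} {W : E →L[ℂ] E}

theorem errOp_eq_sub (hJE2 : JE ∘L JE = 1) (hJF2 : JF ∘L JF = 1) {X : E →L[ℂ] F}
    (hX : kreinAdjoint JF JE A ∘L W ∘L (A ∘L X - 1) = 0) :
    errOp JE A W X = W - W ∘L A ∘L X := by
  have h := kreinAdjoint_comp_comp_eq_zero hJF2 hX X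
  rw [errOp, kreinAdjoint_sub, kreinAdjoint_one hJE2, sub_comp, h, comp_sub, comp_sub]
  ext x
  simp

theorem sub_errOp_eq_conj (hJE : IsSelfAdjoint JE) (hJE2 : JE ∘L JE = 1)
    (hJF2 : JF ∘L JF = 1) (hW : kreinAdjoint JE JE W = W) {X : E →L[ℂ] F}
    (hX : kreinAdjoint JF JE A ∘L W ∘L (A ∘L X - 1) = 0) :
    W - errOp JE A W X = kreinAdjoint JE JE (A ∘L X) ∘L W ∘L A ∘L X := by
  set Q := kreinAdjoint JE JE (A ∘L X)
  have hQW : Q ∘L W ∘L A ∘L X = Q ∘L W := by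
    have h := kreinAdjoint_comp_comp_eq_zero hJF2 hX X
    rwa [comp_sub, comp_sub, one_def, comp_id, sub_eq_zero] at h
  rw [errOp_eq_sub hJE2 hJF2 hX, sub_sub_cancel]
  calc W ∘L A ∘L X = kreinAdjoint JE JE (Q ∘L W) := by
        rw [kreinAdjoint_comp JE JE hJE2, hW, kreinAdjoint_kreinAdjoint hJE hJE2 hJE hJE2]
    _ = kreinAdjoint JE JE (Q ∘L W ∘L A ∘L X) := by rw [hQW]
    _ = Q ∘L W ∘L A ∘L X := kreinAdjoint_conj hJE hJE2 hJE hJE2 hW _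

theorem kreinAdjoint_sub_one_conj_eq_self (hJE : IsSelfAdjoint JE) (hJE2 : JE ∘L JE = 1)
    (hJF2 : JF ∘L JF = 1) {Z : E →L[ℂ] E} (hZ : kreinAdjoint JE JE Z = Z)
    (hAZ : kreinAdjoint JF JE A ∘L Z = 0) (X : E →L[ℂ] F) :
    kreinAdjoint JE JE (A ∘L X - 1) ∘L Z ∘L (A ∘L X - 1) = Z := by
  set Q := kreinAdjoint JE JE (A ∘L X)
  have hQZ : Q ∘L Z = 0 := kreinAdjoint_comp_comp_eq_zero hJF2 hAZ X
  have hZP : Z ∘L A ∘L X = 0 := by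
    calc Z ∘L A ∘L X = kreinAdjoint JE JE (Q ∘L Z) := by
          rw [kreinAdjoint_comp JE JE hJE2, hZ, kreinAdjoint_kreinAdjoint hJE hJE2 hJE hJE2]
      _ = 0 := by simp [hQZ, kreinAdjoint]
  rw [kreinAdjoint_sub, kreinAdjoint_one hJE2, comp_sub Z, hZP, one_def, comp_id, zero_sub,
    comp_neg, sub_comp, hQZ, id_comp, zero_sub, neg_neg]

theorem errOp_sub_eq_conj (hJE : IsSelfAdjoint JE) (hJE2 : JE ∘L JE = 1)
    (hJF2 : JF ∘L JF = 1) {Z : E →L[ℂ] E} (hZ : kreinAdjoint JE JE Z = Z)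
    (hAZ : kreinAdjoint JF JE A ∘L Z = 0) (X : E →L[ℂ] F) :
    errOp JE A W X - Z =
      kreinAdjoint JE JE (A ∘L X - 1) ∘L (W - Z) ∘L (A ∘L X - 1) := by
  rw [sub_comp, comp_sub, kreinAdjoint_sub_one_conj_eq_self hJE hJE2 hJF2 hZ hAZ, errOp]

theorem kreinAdjoint_comp_errOp (hJE2 : JE ∘L JE = 1) (hJF2 : JF ∘L JF = 1) {X : E →L[ℂ] F}
    (hX : kreinAdjoint JF JE A ∘L W ∘L (A ∘L X - 1) = 0) :
    kreinAdjoint JF JE A ∘L errOp JE A W X = 0 := by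
  rw [errOp, kreinAdjoint_sub, kreinAdjoint_one hJE2, sub_comp, comp_sub,
    kreinAdjoint_comp_comp_eq_zero hJF2 hX, comp_zero, zero_sub, neg_eq_zero]
  exact hX

end Congruence

theorem stmt6_general
    (JH : H →L[ℂ] H) (hJHsa : IsSelfAdjoint JH) (hJH2 : JH ∘L JH = 1)
    (JK : K →L[ℂ] K) (hJK2 : JK ∘L JK = 1)
    (A : K →L[ℂ] H) (W : H →L[ℂ] H)
    (hW : JH ∘L (ContinuousLinearMap.adjoint W) ∘L JH = W)
    (hran : ∀ z : K, 0 ≤ (inner ℂ (JH (W (A z))) (A z) : ℂ).re)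
    (X₀ : H →L[ℂ] K)
    (hX₀ : (kreinAdjoint JK JH A) ∘L (W ∘L (A ∘L X₀ - 1)) = 0) :
    kreinAdjoint JH JH (errOp JH A W X₀) = errOp JH A W X₀ ∧
      KreinPositive JH (W - errOp JH A W X₀) ∧
      (∀ x : H, kreinAdjoint JK JH A (errOp JH A W X₀ x) = 0) ∧
      (∀ Z : H →L[ℂ] H,
        (kreinAdjoint JH JH Z = Z ∧ KreinPositive JH (W - Z) ∧
          ∀ x : H, kreinAdjoint JK JH A (Z x) = 0) →
        KreinPositive JH (errOp JH A W X₀ - Z)) := by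
  refine ⟨kreinAdjoint_conj hJHsa hJH2 hJHsa hJH2 hW _, ?_,
    DFunLike.congr_fun (kreinAdjoint_comp_errOp hJH2 hJK2 hX₀), ?_⟩
  · rw [sub_errOp_eq_conj hJHsa hJH2 hJK2 hW hX₀]
    exact kreinPositive_conj hJHsa hJH2 hJHsa hJH2 hW fun x => hran (X₀ x)
  · rintro Z ⟨hZ, hWZ, hAZ⟩
    rw [errOp_sub_eq_conj hJHsa hJH2 hJK2 hZ (ext hAZ)]
    exact kreinPositive_conj hJHsa hJH2 hJHsa hJH2 hWZ.1 fun x => hWZ.2 _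

/-- if `ran A` is `W`-nonnegative, `ran A + ker(A^# W) = H` and `X₀` solves
the normal equation `A^# W (AX₀ − I) = 0`, then `M := (AX₀−I)^# W (AX₀−I)` is the maximum,
in the Krein order, of the set of Krein-selfadjoint `Z` with `W − Z` Krein-positive and
`ran Z ⊆ ker A^#`. -/
theorem stmt6
    [TopologicalSpace.SeparableSpace H] [TopologicalSpace.SeparableSpace K]
    (JH : H →L[ℂ] H) (hJHsa : IsSelfAdjoint JH) (hJH2 : JH ∘L JH = 1)
    (JK : K →L[ℂ] K) (hJKsa : IsSelfAdjoint JK) (hJK2 : JK ∘L JK = 1)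
    (A : K →L[ℂ] H) (W : H →L[ℂ] H)
    (hW : JH ∘L (ContinuousLinearMap.adjoint W) ∘L JH = W)
    (hran : ∀ z : K, 0 ≤ (inner ℂ (JH (W (A z))) (A z) : ℂ).re)
    (hdec : ∀ x : H, ∃ (z : K) (h : H),
      kreinAdjoint JK JH A (W h) = 0 ∧ x = A z + h)
    (X₀ : H →L[ℂ] K)
    (hX₀ : (kreinAdjoint JK JH A) ∘L (W ∘L (A ∘L X₀ - 1)) = 0) :
    kreinAdjoint JH JH (errOp JH A W X₀) = errOp JH A W X₀ ∧
      KreinPositive JH (W - errOp JH A W X₀) ∧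
      (∀ x : H, kreinAdjoint JK JH A (errOp JH A W X₀ x) = 0) ∧
      (∀ Z : H →L[ℂ] H,
        (kreinAdjoint JH JH Z = Z ∧ KreinPositive JH (W - Z) ∧
          ∀ x : H, kreinAdjoint JK JH A (Z x) = 0) →
        KreinPositive JH (errOp JH A W X₀ - Z)) :=
  stmt6_general JH hJHsa hJH2 JK hJK2 A W hW hran X₀ hX₀
end
end
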